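/- arXiv:2408.13346 — 3 statements merged into one kernel-verified Lean document; each statement's English description precedes it below -/
import Mathlib

section
/- Let n ≥ 3 be an integer and let B(m) denote the number of binary partitions of m. If n is even then Σ_{k=1}^{n-2} B(n-k) ≡ 0 (mod 4), and if n is odd then B(n) - Σ_{k=1}^{n-2} B(n-k) ≡ 0 (mod 4). -/
open Finset
open scoped Classical

/-- The finset of binary partitions of `n` (all parts are powers of `2`). -/
noncomputable def binaryPartitions (n : ℕ) : Finset (Nat.Partition n) :=
  Finset.univ.filter fun π => ∀ i ∈ π.parts, ∃ k : ℕ, i = 2 ^ k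

/-- `B(n)`, the number of binary partitions of `n`. -/
noncomputable def Bbin (n : ℕ) : ℕ := (binaryPartitions n).card

/-- `e_j B(n)`, the sum of the `j`-th elementary symmetric polynomial evaluated at the
parts over all binary partitions of `n`. -/
noncomputable def ejB (j n : ℕ) : ℕ := ∑ π ∈ binaryPartitions n, π.parts.esymm j

/-- `σ_{j,bin}(n) = Σ_{d ≥ 0, 2^d ∣ n} 2^{d·j}`. -/
def sigmaBin (j n : ℕ) : ℕ :=
  ∑ d ∈ (Finset.range (n + 1)).filter (fun d => 2 ^ d ∣ n), 2 ^ (d * j)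

lemma mem_binaryPartitions {n : ℕ} {π : Nat.Partition n} :
    π ∈ binaryPartitions n ↔ ∀ i ∈ π.parts, ∃ k : ℕ, i = 2 ^ k := by
  simp [binaryPartitions]

lemma one_mem_of_odd {n : ℕ} (hn : Odd n) {π : Nat.Partition n}
    (hπ : π ∈ binaryPartitions n) : 1 ∈ π.parts := by
  by_contra h
  have hdvd : 2 ∣ π.parts.sum := by
    apply Multiset.dvd_sum
    intro i hi
    obtain ⟨k, rfl⟩ := (mem_binaryPartitions.1 hπ) i hi
    cases k with
    | zero => exact absurd hi h
    | succ k => exact dvd_pow_self 2 k.succ_ne_zero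
  rw [π.parts_sum] at hdvd
  exact (Nat.not_even_iff_odd.2 hn) (even_iff_two_dvd.2 hdvd)

/-- Add a part equal to `1`. -/
def cons1 {n : ℕ} (π : Nat.Partition n) : Nat.Partition (n + 1) where
  parts := 1 ::ₘ π.parts
  parts_pos := by
    intro i hi
    rcases Multiset.mem_cons.1 hi with rfl | h
    · exact one_pos
    · exact π.parts_pos h
  parts_sum := by simp [π.parts_sum, Nat.add_comm]

/-- Remove a part equal to `1`. -/
def erase1 {n : ℕ} (π : Nat.Partition (n + 1)) (h : 1 ∈ π.parts) : Nat.Partition n where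
  parts := π.parts.erase 1
  parts_pos h' := π.parts_pos (Multiset.mem_of_mem_erase h')
  parts_sum := by
    have hs := π.parts_sum
    rw [← Multiset.cons_erase h, Multiset.sum_cons] at hs
    omega

lemma cons1_mem {n : ℕ} {π : Nat.Partition n} (hπ : π ∈ binaryPartitions n) :
    cons1 π ∈ binaryPartitions (n + 1) := by
  rw [mem_binaryPartitions] at hπ ⊢
  intro i hi
  rcases Multiset.mem_cons.1 hi with rfl | h
  · exact ⟨0, rfl⟩
  · exact hπ i h

lemma erase1_mem {n : ℕ} {π : Nat.Partition (n + 1)} (h : 1 ∈ π.parts)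
    (hπ : π ∈ binaryPartitions (n + 1)) : erase1 π h ∈ binaryPartitions n := by
  rw [mem_binaryPartitions] at hπ ⊢
  intro i hi
  exact hπ i (Multiset.mem_of_mem_erase hi)

lemma Bbin_two_mul_add_one (m : ℕ) : Bbin (2 * m + 1) = Bbin (2 * m) := by
  unfold Bbin
  refine Finset.card_bij'
    (fun π hπ => erase1 π (one_mem_of_odd ⟨m, by ring⟩ hπ))
    (fun π _ => cons1 π) (fun π hπ => erase1_mem _ hπ) (fun π hπ => cons1_mem hπ)
    ?_ ?_
  · intro π hπ
    apply Nat.Partition.ext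
    exact Multiset.cons_erase (one_mem_of_odd ⟨m, by ring⟩ hπ)
  · intro π hπ
    apply Nat.Partition.ext
    exact Multiset.erase_cons_head 1 π.parts

/-- Double every part. -/
def doubleP {m : ℕ} (π : Nat.Partition m) : Nat.Partition (2 * m) where
  parts := π.parts.map (fun x => 2 * x)
  parts_pos := by
    intro i hi
    obtain ⟨a, ha, rfl⟩ := Multiset.mem_map.1 hi
    exact Nat.mul_pos two_pos (π.parts_pos ha)
  parts_sum := by
    rw [show (fun x => 2 * x) = (fun x => 2 * id x) from rfl,
      Multiset.sum_map_mul_left, Multiset.map_id, π.parts_sum]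

lemma halve_key {n : ℕ} (π : Nat.Partition n) (h : ∀ i ∈ π.parts, 2 ∣ i) :
    (π.parts.map (· / 2)).map (fun x => 2 * x) = π.parts := by
  rw [Multiset.map_map]
  calc π.parts.map ((fun x => 2 * x) ∘ (· / 2))
      = π.parts.map id := Multiset.map_congr rfl (fun x hx => Nat.mul_div_cancel' (h x hx))
    _ = π.parts := Multiset.map_id _

/-- Halve every part (assuming all parts are even). -/
def halveP {m : ℕ} (π : Nat.Partition (2 * m)) (h : ∀ i ∈ π.parts, 2 ∣ i) :
    Nat.Partition m where
  parts := π.parts.map (· / 2)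
  parts_pos := by
    intro i hi
    obtain ⟨a, ha, rfl⟩ := Multiset.mem_map.1 hi
    have h2 : 2 ≤ a := Nat.le_of_dvd (π.parts_pos ha) (h a ha)
    exact Nat.div_pos h2 two_pos
  parts_sum := by
    have key := halve_key π h
    have : ((π.parts.map (· / 2)).map (fun x => 2 * x)).sum = 2 * m := by
      rw [key, π.parts_sum]
    rw [show (fun x : ℕ => 2 * x) = (fun x => 2 * id x) from rfl,
      Multiset.sum_map_mul_left, Multiset.map_id] at this
    omega

lemma parts_even_of_no_one {n : ℕ} {π : Nat.Partition n}
    (hπ : π ∈ binaryPartitions n) (h1 : 1 ∉ π.parts) : ∀ i ∈ π.parts, 2 ∣ i := by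
  intro i hi
  obtain ⟨k, rfl⟩ := (mem_binaryPartitions.1 hπ) i hi
  cases k with
  | zero => exact absurd hi h1
  | succ k => exact dvd_pow_self 2 k.succ_ne_zero

lemma Bbin_two_mul_add_two (m : ℕ) :
    Bbin (2 * m + 2) = Bbin (2 * m + 1) + Bbin (m + 1) := by
  unfold Bbin
  rw [← Finset.card_filter_add_card_filter_not
    (s := binaryPartitions (2 * m + 2)) (fun π => 1 ∈ π.parts)]
  congr 1
  · -- with a one ↔ partitions of 2m+1
    refine Finset.card_bij'
      (fun π hπ => erase1 (n := 2 * m + 1) π (Finset.mem_filter.1 hπ).2)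
      (fun π _ => cons1 π)
      (fun π hπ => erase1_mem _ (Finset.mem_filter.1 hπ).1)
      (fun π hπ => Finset.mem_filter.2 ⟨cons1_mem hπ, Multiset.mem_cons_self 1 _⟩)
      ?_ ?_
    · intro π hπ
      apply Nat.Partition.ext
      exact Multiset.cons_erase (Finset.mem_filter.1 hπ).2
    · intro π hπ
      apply Nat.Partition.ext
      exact Multiset.erase_cons_head 1 π.parts
  · -- no one ↔ partitions of m+1 (halve/double)
    refine Finset.card_bij'
      (fun π hπ => halveP (m := m + 1) π
        (parts_even_of_no_one (Finset.mem_filter.1 hπ).1 (Finset.mem_filter.1 hπ).2))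
      (fun π _ => doubleP (m := m + 1) π)
      ?_ ?_ ?_ ?_
    · intro π hπ
      rw [mem_binaryPartitions]
      intro i hi
      obtain ⟨a, ha, rfl⟩ := Multiset.mem_map.1 hi
      obtain ⟨k, rfl⟩ :=
        (mem_binaryPartitions.1 (Finset.mem_filter.1 hπ).1) a ha
      cases k with
      | zero => exact absurd ha (Finset.mem_filter.1 hπ).2
      | succ k =>
        refine ⟨k, ?_⟩
        rw [pow_succ, Nat.mul_div_cancel _ two_pos]
    · intro π hπ
      refine Finset.mem_filter.2 ⟨?_, ?_⟩
      · rw [mem_binaryPartitions]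
        intro i hi
        obtain ⟨a, ha, rfl⟩ := Multiset.mem_map.1 hi
        obtain ⟨k, rfl⟩ := (mem_binaryPartitions.1 hπ) a ha
        exact ⟨k + 1, by rw [pow_succ, Nat.mul_comm]⟩
      · intro hmem
        obtain ⟨a, ha, hae⟩ := Multiset.mem_map.1 hmem
        have := π.parts_pos ha
        omega
    · intro π hπ
      apply Nat.Partition.ext
      exact halve_key π (parts_even_of_no_one (Finset.mem_filter.1 hπ).1
        (Finset.mem_filter.1 hπ).2)
    · intro π hπ
      apply Nat.Partition.ext
      show (π.parts.map (fun x => 2 * x)).map (· / 2) = π.parts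
      rw [Multiset.map_map]
      calc π.parts.map ((· / 2) ∘ (fun x => 2 * x))
          = π.parts.map id :=
            Multiset.map_congr rfl (fun x _ => Nat.mul_div_cancel_left x two_pos)
        _ = π.parts := Multiset.map_id _

lemma Bbin_even : ∀ n, 2 ≤ n → 2 ∣ Bbin n := by
  intro n
  induction n using Nat.strong_induction_on with
  | _ n ih =>
    intro hn
    rcases Nat.even_or_odd n with he | ho
    · obtain ⟨m, hm⟩ := he
      have hm' : n = 2 * m := by omega
      have hm1 : 1 ≤ m := by omega
      obtain ⟨t, rfl⟩ : ∃ t, m = t + 1 := ⟨m - 1, by omega⟩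
      subst hm'
      rw [show 2 * (t + 1) = 2 * t + 2 by ring, Bbin_two_mul_add_two]
      rcases Nat.eq_zero_or_pos t with rfl | ht
    -- t = 0 : Bbin 1 + Bbin 1
      · rw [Bbin_two_mul_add_one 0]
        omega
      · have h1 : 2 ∣ Bbin (2 * t + 1) := ih (2 * t + 1) (by omega) (by omega)
        have h2 : 2 ∣ Bbin (t + 1) := ih (t + 1) (by omega) (by omega)
        omega
    · obtain ⟨m, rfl⟩ := ho
      rw [Bbin_two_mul_add_one]
      exact ih (2 * m) (by omega) (by omega)

lemma Bbin_key : ∀ n, 3 ≤ n →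
    (Even n → (4 : ℤ) ∣ ((∑ m ∈ Finset.Ico 2 n, Bbin m : ℕ) : ℤ)) ∧
    (Odd n → (4 : ℤ) ∣ (Bbin n : ℤ) - ((∑ m ∈ Finset.Ico 2 n, Bbin m : ℕ) : ℤ)) := by
  intro n hn
  induction n, hn using Nat.le_induction with
  | base =>
    constructor
    · intro h; exact absurd h (by decide)
    · intro _
      rw [show Finset.Ico 2 3 = {2} from rfl, Finset.sum_singleton,
        show (3 : ℕ) = 2 * 1 + 1 from rfl, Bbin_two_mul_add_one 1]
      simp
  | succ n hn ih =>
    have hsum : (∑ m ∈ Finset.Ico 2 (n + 1), Bbin m) =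
        (∑ m ∈ Finset.Ico 2 n, Bbin m) + Bbin n :=
      Finset.sum_Ico_succ_top (by omega) _
    rcases Nat.even_or_odd n with he | ho
    · -- n even, n+1 odd
      obtain ⟨m, hm⟩ := he
      have hT := ih.1 ⟨m, hm⟩
      constructor
      · intro h
        exact absurd (⟨m, hm⟩ : Even n) (Nat.even_add_one.1 h)
      · intro _
        have hB : Bbin (n + 1) = Bbin n := by
          rw [show n + 1 = 2 * m + 1 by omega, Bbin_two_mul_add_one, show 2 * m = n by omega]
        rw [hsum, hB]
        push_cast
        obtain ⟨c, hc⟩ := hT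
        push_cast at hc
        rw [hc]
        exact ⟨-c, by ring⟩
    · -- n odd, n+1 even
      have hd := ih.2 ho
      have hBeven : 2 ∣ Bbin n := Bbin_even n (by omega)
      constructor
      · intro _
        rw [hsum]
        obtain ⟨c, hc⟩ := hd
        obtain ⟨b, hb⟩ := hBeven
        push_cast [hb] at hc ⊢
        exact ⟨b - c, by linarith⟩
      · intro h
        obtain ⟨a, ha⟩ := ho
        obtain ⟨b, hb⟩ := h
        omega

theorem binaryPartition_sum_mod_four (n : ℕ) (hn : 3 ≤ n) :
    (Even n → (∑ k ∈ Finset.Icc 1 (n - 2), Bbin (n - k)) % 4 = 0) ∧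
    (Odd n → (4 : ℤ) ∣ (Bbin n : ℤ) - ∑ k ∈ Finset.Icc 1 (n - 2), (Bbin (n - k) : ℤ)) := by
  have hre : (∑ k ∈ Finset.Icc 1 (n - 2), Bbin (n - k)) = ∑ m ∈ Finset.Ico 2 n, Bbin m := by
    refine Finset.sum_bij' (fun k _ => n - k) (fun m _ => n - m) ?_ ?_ ?_ ?_ ?_
    · intro a ha
      simp only [Finset.mem_Icc] at ha
      simp only [Finset.mem_Ico]
      omega
    · intro a ha
      simp only [Finset.mem_Ico] at ha
      simp only [Finset.mem_Icc]
      omega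
    · intro a ha
      simp only [Finset.mem_Icc] at ha
      show n - (n - a) = a
      omega
    · intro a ha
      simp only [Finset.mem_Ico] at ha
      show n - (n - a) = a
      omega
    · intro a _
      rfl
  obtain ⟨h1, h2⟩ := Bbin_key n hn
  constructor
  · intro he
    have := h1 he
    rw [hre]
    have hnat : (4 : ℕ) ∣ ∑ m ∈ Finset.Ico 2 n, Bbin m := by exact_mod_cast this
    omega
  · intro ho
    have := h2 ho
    have hcast : (∑ k ∈ Finset.Icc 1 (n - 2), (Bbin (n - k) : ℤ)) =
        ((∑ m ∈ Finset.Ico 2 n, Bbin m : ℕ) : ℤ) := by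
      rw [← hre]; push_cast; rfl
    rw [hcast]
    exact this
end

section
/- If λ and μ are partitions of the same integer n ≥ 0, each having at most 3 parts, then pre_2(λ) = pre_2(μ) if and only if λ = μ. Here pre_2(ν) is the multiset of pairwise products of distinct-index parts of ν. -/
open Finset

/-- `pre₂(λ)`: the multiset of pairwise products `λ_i * λ_j` (over pairs of distinct
indices `i < j`) of the parts of the partition `λ`. -/
def pre2 {n : ℕ} (π : Nat.Partition n) : Multiset ℕ :=
  (π.parts.powersetCard 2).map Multiset.prod

/-- Recover the parts of a partition of `n` with at most 3 parts from its `pre2`. -/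
def recov (n : ℕ) (s : Multiset ℕ) : Multiset ℕ :=
  if Multiset.card s = 0 then (if n = 0 then 0 else {n})
  else if Multiset.card s = 1 then
    let d := Nat.sqrt (n ^ 2 - 4 * s.prod)
    {(n + d) / 2, (n - d) / 2}
  else s.map (fun x => Nat.sqrt s.prod / x)

lemma pre2_pair (a b : ℕ) :
    ((a ::ₘ b ::ₘ 0 : Multiset ℕ).powersetCard 2).map Multiset.prod = {a * b} := by
  simp [Multiset.powersetCard_cons, Multiset.powersetCard_one]

lemma pre2_triple (a b c : ℕ) :
    ((a ::ₘ b ::ₘ c ::ₘ 0 : Multiset ℕ).powersetCard 2).map Multiset.prod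
      = {a * b, a * c, b * c} := by
  simp [Multiset.powersetCard_cons, Multiset.powersetCard_one]
  ring_nf
  show a*c ::ₘ c*b ::ₘ a*b ::ₘ 0 = a*b ::ₘ a*c ::ₘ c*b ::ₘ 0
  rw [Multiset.cons_swap (c*b) (a*b), Multiset.cons_swap (a*c) (a*b)]

lemma recov_pre2 {n : ℕ} (π : Nat.Partition n) (hπ : Multiset.card π.parts ≤ 3) :
    recov n (pre2 π) = π.parts := by
  have hsum := π.parts_sum
  interval_cases h : Multiset.card π.parts
  · -- 0 parts
    rw [Multiset.card_eq_zero] at h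
    have hn : n = 0 := by rw [← hsum, h]; rfl
    simp [recov, pre2, h, hn]
  · -- 1 part
    rw [Multiset.card_eq_one] at h
    obtain ⟨a, ha⟩ := h
    have hpos : 0 < a := π.parts_pos (by rw [ha]; simp)
    have hn : n = a := by rw [← hsum, ha]; simp
    have hp2 : pre2 π = 0 := by
      rw [pre2, ha]
      show ((a ::ₘ 0 : Multiset ℕ).powersetCard 2).map Multiset.prod = 0
      simp [Multiset.powersetCard_cons]
    rw [hp2]
    simp [recov, ha, hn]
    omega
  · -- 2 parts
    rw [Multiset.card_eq_two] at h
    obtain ⟨x, y, hxy⟩ := h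
    -- wlog the first is the larger one
    obtain ⟨a, b, hba, ha⟩ : ∃ a b, b ≤ a ∧ π.parts = {a, b} := by
      rcases le_total y x with hl | hl
      · exact ⟨x, y, hl, hxy⟩
      · exact ⟨y, x, hl, by rw [hxy, Multiset.pair_comm]⟩
    obtain ⟨k, rfl⟩ := Nat.exists_eq_add_of_le hba
    have hn : n = 2 * b + k := by rw [← hsum, ha]; simp; ring
    have hp2 : pre2 π = {(b + k) * b} := by
      rw [pre2, ha]; exact pre2_pair (b + k) b
    rw [hp2]
    have hsub : n ^ 2 - 4 * ((b + k) * b) = k ^ 2 := by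
      have : n ^ 2 = k ^ 2 + 4 * ((b + k) * b) := by rw [hn]; ring
      omega
    have hk : Nat.sqrt (k ^ 2) = k := Nat.sqrt_eq' k
    rw [recov]
    simp only [Multiset.prod_singleton, Multiset.card_singleton]
    norm_num
    rw [hsub, hk, ha]
    have h1 : (n + k) / 2 = b + k := by omega
    have h2 : (n - k) / 2 = b := by omega
    rw [h1, h2]
    rfl
  · -- 3 parts
    rw [Multiset.card_eq_three] at h
    obtain ⟨a, b, c, habc⟩ := h
    have hpa : 0 < a := π.parts_pos (by rw [habc]; simp)
    have hpb : 0 < b := π.parts_pos (by rw [habc]; simp)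
    have hpc : 0 < c := π.parts_pos (by rw [habc]; simp)
    have hp2 : pre2 π = {a * b, a * c, b * c} := by
      rw [pre2, habc]; exact pre2_triple a b c
    rw [hp2]
    have hprod : a * b * (a * c * (b * c)) = (a * b * c) ^ 2 := by ring
    rw [recov]
    norm_num
    rw [hprod, Nat.sqrt_eq']
    have e1 : a * b * c / (a * b) = c := by
      rw [Nat.mul_div_cancel_left c (by positivity : 0 < a * b)]
    have e2 : a * b * c / (a * c) = b := by
      rw [show a * b * c = (a * c) * b by ring, Nat.mul_div_cancel_left b (by positivity : 0 < a * c)]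
    have e3 : a * b * c / (b * c) = a := by
      rw [show a * b * c = (b * c) * a by ring, Nat.mul_div_cancel_left a (by positivity : 0 < b * c)]
    show (Multiset.map _ (a * b ::ₘ a * c ::ₘ b * c ::ₘ 0)) = _
    rw [habc]
    simp only [Multiset.map_cons, Multiset.map_zero, e1, e2, e3]
    show c ::ₘ b ::ₘ a ::ₘ 0 = a ::ₘ b ::ₘ c ::ₘ 0
    rw [Multiset.cons_swap c b, Multiset.cons_swap c a, Multiset.cons_swap b a]

theorem pre2_injective_of_length_le_three {n : ℕ} (π μ : Nat.Partition n)
    (hπ : Multiset.card π.parts ≤ 3) (hμ : Multiset.card μ.parts ≤ 3) :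
    pre2 π = pre2 μ ↔ π = μ := by
  constructor
  · intro h
    have : π.parts = μ.parts := by
      rw [← recov_pre2 π hπ, ← recov_pre2 μ hμ, h]
    exact Nat.Partition.ext this
  · intro h; rw [h]
end

section
/- If λ and μ are binary partitions of the same integer n ≥ 0, then pre_2(λ) = pre_2(μ) if and only if λ = μ. Here pre_2(ν) is the multiset of pairwise products of distinct-index parts of ν. -/
/-!
Squaring every part squares every pairwise product, and `(∑ x)² = 2 e₂ + ∑ x²` recovers the
sum of squares from the sum and from `pre₂`. Iterating, `n` and `pre₂(λ)` determine every power
sum `p_{2^k}(λ)`. For a binary partition with parts `2^a`, `a ∈ A`, this power sum is the value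
of the polynomial `∑_{a ∈ A} X^a` at `2^{2^k}`; infinitely many values pin down the polynomial,
hence its coefficients, which are the multiplicities in `A`.
-/

open Finset

def pairProducts {R : Type*} [CommMonoid R] (m : Multiset R) : Multiset R :=
  (m.powersetCard 2).map Multiset.prod

theorem pairProducts_map_pow {R : Type*} [CommMonoid R] (m : Multiset R) (e : ℕ) :
    pairProducts (m.map (· ^ e)) = (pairProducts m).map (· ^ e) := by
  simp only [pairProducts, Multiset.powersetCard_map, Multiset.map_map, Function.comp_def,
    Multiset.prod_map_pow, Multiset.map_id']

theorem pre2_eq_pairProducts {n : ℕ} (π : Nat.Partition n) : pre2 π = pairProducts π.parts :=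
  rfl

section CommSemiring

variable {R : Type*} [CommSemiring R]

theorem sq_sum_eq_two_mul_esymm_add_sum_sq (m : Multiset R) :
    m.sum ^ 2 = 2 * m.esymm 2 + (m.map (· ^ 2)).sum := by
  induction m using Multiset.induction with
  | empty => simp [Multiset.esymm, Multiset.powersetCard_zero_right]
  | cons a m ih =>
    have hcons : (a ::ₘ m).esymm 2 = a * m.sum + m.esymm 2 := by
      simp only [Multiset.esymm, Multiset.powersetCard_cons, Nat.reduceAdd,
        Multiset.powersetCard_one, Multiset.map_map, Function.comp_apply, Multiset.map_add,
        Multiset.prod_cons, Multiset.prod_singleton, Multiset.sum_add]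
      rw [Multiset.sum_map_mul_left, Multiset.map_id', add_comm]
    rw [hcons, Multiset.sum_cons, Multiset.map_cons, Multiset.sum_cons, add_sq, ih]
    ring

variable [IsLeftCancelAdd R]

theorem sum_map_sq_eq_of_pairProducts_eq {s t : Multiset R}
    (h : pairProducts s = pairProducts t) (hsum : s.sum = t.sum) :
    (s.map (· ^ 2)).sum = (t.map (· ^ 2)).sum := by
  have hs := sq_sum_eq_two_mul_esymm_add_sum_sq s
  have ht := sq_sum_eq_two_mul_esymm_add_sum_sq t
  have he : s.esymm 2 = t.esymm 2 := congrArg Multiset.sum h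
  rw [hsum, ht, he] at hs
  exact (add_left_cancel hs).symm

theorem sum_map_pow_two_pow_eq_of_pairProducts_eq {s t : Multiset R}
    (h : pairProducts s = pairProducts t) (hsum : s.sum = t.sum) (k : ℕ) :
    (s.map (· ^ 2 ^ k)).sum = (t.map (· ^ 2 ^ k)).sum := by
  induction k generalizing s t with
  | zero => simpa using hsum
  | succ k ih =>
    have hsq : ∀ u : Multiset R, u.map (· ^ 2 ^ (k + 1)) = (u.map (· ^ 2)).map (· ^ 2 ^ k) := by
      intro u
      rw [Multiset.map_map]
      exact Multiset.map_congr rfl fun x _ => by rw [Function.comp_apply, ← pow_mul, ← pow_succ']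
    rw [hsq, hsq]
    refine ih ?_ (sum_map_sq_eq_of_pairProducts_eq h hsum)
    rw [pairProducts_map_pow, pairProducts_map_pow, h]

end CommSemiring

open Polynomial in
theorem Multiset.coeff_sum_map_X_pow {R : Type*} [Semiring R] (A : Multiset ℕ) (c : ℕ) :
    (A.map ((X : R[X]) ^ ·)).sum.coeff c = A.count c := by
  induction A using Multiset.induction with
  | empty => simp
  | cons a A ih =>
    simp only [Multiset.map_cons, Multiset.sum_cons, coeff_add, ih, coeff_X_pow,
      Multiset.count_cons]
    split_ifs <;> simp [add_comm]

open Polynomial in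
theorem Multiset.eq_of_sum_map_pow_eq {R : Type*} [CommRing R] [IsDomain R] [CharZero R]
    {A B : Multiset ℕ} {S : Set R} (hS : S.Infinite)
    (h : ∀ x ∈ S, (A.map (x ^ ·)).sum = (B.map (x ^ ·)).sum) : A = B := by
  set P : R[X] := (A.map (X ^ ·)).sum - (B.map (X ^ ·)).sum
  have hroots : S ⊆ {x | P.IsRoot x} := fun x hx => by
    simp [P, eval_multisetSum, Multiset.map_map, h x hx]
  have hP : P = 0 := P.eq_zero_of_infinite_isRoot (hS.mono hroots)
  ext c
  have := congrArg (coeff · c) (sub_eq_zero.mp hP)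
  simpa [Multiset.coeff_sum_map_X_pow] using this

theorem Multiset.eq_map_pow_log {b : ℕ} (hb : 1 < b) {m : Multiset ℕ}
    (hm : ∀ i ∈ m, ∃ k : ℕ, i = b ^ k) : m = (m.map (Nat.log b)).map (b ^ ·) := by
  rw [Multiset.map_map]
  conv_lhs => rw [← Multiset.map_id m]
  refine Multiset.map_congr rfl fun i hi => ?_
  obtain ⟨k, rfl⟩ := hm i hi
  simp [Nat.log_pow hb]

theorem Multiset.eq_of_sum_map_pow_two_pow_eq {b : ℕ} (hb : 1 < b) {s t : Multiset ℕ}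
    (hs : ∀ i ∈ s, ∃ k : ℕ, i = b ^ k) (ht : ∀ i ∈ t, ∃ k : ℕ, i = b ^ k)
    (h : ∀ k, (s.map (· ^ 2 ^ k)).sum = (t.map (· ^ 2 ^ k)).sum) : s = t := by
  obtain ⟨A, rfl⟩ : ∃ A : Multiset ℕ, s = A.map (b ^ ·) := ⟨_, Multiset.eq_map_pow_log hb hs⟩
  obtain ⟨B, rfl⟩ : ∃ B : Multiset ℕ, t = B.map (b ^ ·) := ⟨_, Multiset.eq_map_pow_log hb ht⟩
  have hinj : StrictMono fun k : ℕ => (b : ℤ) ^ 2 ^ k :=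
    (pow_right_strictMono₀ (by exact_mod_cast hb)).comp (pow_right_strictMono₀ one_lt_two)
  suffices A = B by rw [this]
  refine Multiset.eq_of_sum_map_pow_eq (Set.infinite_range_of_injective hinj.injective) ?_
  rintro _ ⟨k, rfl⟩
  have := congrArg (Nat.cast : ℕ → ℤ) (h k)
  push_cast [Multiset.map_map, Function.comp_def] at this ⊢
  simpa only [pow_right_comm (b : ℤ) _ (2 ^ k)] using this

theorem pre2_injective_on_binary {n : ℕ} (π μ : Nat.Partition n)
    (hπ : ∀ i ∈ π.parts, ∃ k : ℕ, i = 2 ^ k) (hμ : ∀ i ∈ μ.parts, ∃ k : ℕ, i = 2 ^ k) :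
    pre2 π = pre2 μ ↔ π = μ := by
  refine ⟨fun h => Nat.Partition.ext ?_, fun h => h ▸ rfl⟩
  rw [pre2_eq_pairProducts, pre2_eq_pairProducts] at h
  have hsum : π.parts.sum = μ.parts.sum := by rw [π.parts_sum, μ.parts_sum]
  exact Multiset.eq_of_sum_map_pow_two_pow_eq one_lt_two hπ hμ
    (sum_map_pow_two_pow_eq_of_pairProducts_eq h hsum)
end
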